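/- Let E be a real inner product space, f̂ : E → ℝ, g, η ∈ E, A, H : E → E, and constants L_H ≥ 0, c₁ ≥ 0, c₃ > 0, ε_H > 0, Δ > 0. Set m(ξ) = f̂(0) + ⟪ξ, g⟫ + (1/2)⟪ξ, H(ξ)⟫. Assume: ‖η‖ ≤ Δ ≤ 3c₃ε_H/(L_H + c₁); |f̂(η) − f̂(0) − ⟪η, g⟫ − (1/2)⟪η, A(η)⟫| ≤ (L_H/6)‖η‖³; |⟪η, A(η)⟫ − ⟪η, H(η)⟫| ≤ (c₁Δ/3)‖η‖²; and m(0) − m(η) ≥ c₃·Δ²·ε_H. Then the ratio ρ = (f̂(0) − f̂(η))/(m(0) − m(η)) satisfies |ρ − 1| ≤ 1/2. -/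

import Mathlib

/-!
The actual and predicted reductions differ by the third-order Taylor remainder of `f̂` plus half
the discrepancy between `A` and `H` along `η`; both are controlled by `‖η‖ ≤ Δ`, giving at most
`(L_H + c₁) Δ³ / 6 ≤ c₃ ε_H Δ² / 2`, which is half the guaranteed predicted reduction.
-/

open RealInnerProductSpace

theorem abs_div_sub_one_le_of_abs_sub_le {N D t : ℝ} (hD : 0 < D) (h : |N - D| ≤ t * D) :
    |N / D - 1| ≤ t := by
  rwa [div_sub_one hD.ne', abs_div, abs_of_pos hD, div_le_iff₀ hD]

theorem abs_reduction_sub_model_reduction_le {E : Type*} [NormedAddCommGroup E]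
    [InnerProductSpace ℝ E] (f : E → ℝ) (g : E) (A H : E → E) (m : E → ℝ)
    (hm : ∀ ξ, m ξ = f 0 + ⟪ξ, g⟫ + 1 / 2 * ⟪ξ, H ξ⟫) (η : E) :
    |(f 0 - f η) - (m 0 - m η)|
      ≤ |f η - f 0 - ⟪η, g⟫ - 1 / 2 * ⟪η, A η⟫| + 1 / 2 * |⟪η, A η⟫ - ⟪η, H η⟫| := by
  have hsplit : (f 0 - f η) - (m 0 - m η)
      = -((f η - f 0 - ⟪η, g⟫ - 1 / 2 * ⟪η, A η⟫) + 1 / 2 * (⟪η, A η⟫ - ⟪η, H η⟫)) := by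
    simp only [hm, inner_zero_left]
    ring
  calc |(f 0 - f η) - (m 0 - m η)|
      ≤ |f η - f 0 - ⟪η, g⟫ - 1 / 2 * ⟪η, A η⟫| + |1 / 2 * (⟪η, A η⟫ - ⟪η, H η⟫)| := by
        rw [hsplit, abs_neg]
        exact abs_add_le _ _
    _ = _ := by rw [abs_mul, abs_of_pos (one_half_pos : (0 : ℝ) < 1 / 2)]

theorem cubic_error_le {LH c₁ κ Δ r : ℝ} (hLH : 0 ≤ LH) (hc₁ : 0 ≤ c₁) (hr : 0 ≤ r)
    (hrΔ : r ≤ Δ) (hΔ : Δ * (LH + c₁) ≤ 3 * κ) :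
    LH / 6 * r ^ 3 + 1 / 2 * (c₁ * Δ / 3 * r ^ 2) ≤ κ * Δ ^ 2 / 2 := by
  have hΔ0 : 0 ≤ Δ := hr.trans hrΔ
  calc LH / 6 * r ^ 3 + 1 / 2 * (c₁ * Δ / 3 * r ^ 2)
      ≤ LH / 6 * Δ ^ 3 + 1 / 2 * (c₁ * Δ / 3 * Δ ^ 2) := by gcongr
    _ = Δ * (LH + c₁) * Δ ^ 2 / 6 := by ring
    _ ≤ 3 * κ * Δ ^ 2 / 6 := by gcongr
    _ = κ * Δ ^ 2 / 2 := by ring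

theorem stmt10_general {E : Type*} [NormedAddCommGroup E] [InnerProductSpace ℝ E]
    (fhat : E → ℝ) (g η : E) (A H : E → E)
    (LH c₁ c₃ εH Δ : ℝ)
    (hLH : 0 ≤ LH) (hc₁ : 0 ≤ c₁) (hΔ : 0 < Δ)
    (m : E → ℝ) (hm : ∀ ξ, m ξ = fhat 0 + ⟪ξ, g⟫ + 1 / 2 * ⟪ξ, H ξ⟫)
    (hηΔ : ‖η‖ ≤ Δ) (hΔsmall : Δ ≤ 3 * c₃ * εH / (LH + c₁))
    (hlip : |fhat η - fhat 0 - ⟪η, g⟫ - 1 / 2 * ⟪η, A η⟫| ≤ LH / 6 * ‖η‖ ^ 3)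
    (hAH : |⟪η, A η⟫ - ⟪η, H η⟫| ≤ c₁ * Δ / 3 * ‖η‖ ^ 2)
    (hdec : m 0 - m η ≥ c₃ * Δ ^ 2 * εH) :
    |(fhat 0 - fhat η) / (m 0 - m η) - 1| ≤ 1 / 2 := by
  have hκ : 0 < c₃ * εH := by
    rcases div_pos_iff.mp (hΔ.trans_le hΔsmall) with ⟨h, -⟩ | ⟨-, h⟩ <;> linarith
  have hΔκ : Δ * (LH + c₁) ≤ 3 * (c₃ * εH) := by
    rw [← mul_assoc]
    exact mul_le_of_le_div₀ (by linarith) (add_nonneg hLH hc₁) hΔsmall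
  have hD : 0 < m 0 - m η := by nlinarith [mul_pos hκ (pow_pos hΔ 2)]
  refine abs_div_sub_one_le_of_abs_sub_le hD ?_
  calc |fhat 0 - fhat η - (m 0 - m η)|
      ≤ |fhat η - fhat 0 - ⟪η, g⟫ - 1 / 2 * ⟪η, A η⟫| + 1 / 2 * |⟪η, A η⟫ - ⟪η, H η⟫| :=
        abs_reduction_sub_model_reduction_le fhat g A H m hm η
    _ ≤ LH / 6 * ‖η‖ ^ 3 + 1 / 2 * (c₁ * Δ / 3 * ‖η‖ ^ 2) := by gcongr
    _ ≤ c₃ * εH * Δ ^ 2 / 2 := cubic_error_le hLH hc₁ (norm_nonneg η) hηΔ hΔκ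
    _ ≤ 1 / 2 * (m 0 - m η) := by linarith

theorem stmt10 {E : Type*} [NormedAddCommGroup E] [InnerProductSpace ℝ E]
    (fhat : E → ℝ) (g η : E) (A H : E → E)
    (LH c₁ c₃ εH Δ : ℝ)
    (hLH : 0 ≤ LH) (hc₁ : 0 ≤ c₁) (hc₃ : 0 < c₃) (hεH : 0 < εH) (hΔ : 0 < Δ)
    (m : E → ℝ) (hm : ∀ ξ, m ξ = fhat 0 + ⟪ξ, g⟫ + 1 / 2 * ⟪ξ, H ξ⟫)
    (hηΔ : ‖η‖ ≤ Δ) (hΔsmall : Δ ≤ 3 * c₃ * εH / (LH + c₁))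
    (hlip : |fhat η - fhat 0 - ⟪η, g⟫ - 1 / 2 * ⟪η, A η⟫| ≤ LH / 6 * ‖η‖ ^ 3)
    (hAH : |⟪η, A η⟫ - ⟪η, H η⟫| ≤ c₁ * Δ / 3 * ‖η‖ ^ 2)
    (hdec : m 0 - m η ≥ c₃ * Δ ^ 2 * εH) :
    |(fhat 0 - fhat η) / (m 0 - m η) - 1| ≤ 1 / 2 :=
  stmt10_general fhat g η A H LH c₁ c₃ εH Δ hLH hc₁ hΔ m hm hηΔ hΔsmall hlip hAH hdec
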